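/- Let ω = (α⁺, α⁻, γ₁, δ) ∈ Ω̂ and suppose that for every z ∈ ℂ, E_ω(z) = lim_{R→∞} ∏_{i : α_i⁺ > R^{−2}} (1 − α_i⁺ z) · ∏_{i : α_i⁻ > R^{−2}} (1 + α_i⁻ z). Then γ₂ = 0 and γ₁ = lim_{R→∞} (∑_{i : α_i⁺ > R^{−2}} α_i⁺ − ∑_{i : α_i⁻ > R^{−2}} α_i⁻). -/

import Mathlib

open Filter Topology Finset

/-- The parameter space Ω̂ of quadruples (α⁺, α⁻, γ₁, δ). -/
structure OmegaHat where
  aP : ℕ → ℝ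
  aM : ℕ → ℝ
  g1 : ℝ
  del : ℝ
  aP_nonneg : ∀ i, 0 ≤ aP i
  aM_nonneg : ∀ i, 0 ≤ aM i
  aP_antitone : Antitone aP
  aM_antitone : Antitone aM
  del_nonneg : 0 ≤ del
  summable_aP_sq : Summable fun i => aP i ^ 2
  summable_aM_sq : Summable fun i => aM i ^ 2
  sum_sq_le : (∑' i, aP i ^ 2) + (∑' i, aM i ^ 2) ≤ del

/-- γ₂ = δ − ∑ (α_i⁺)² − ∑ (α_i⁻)². -/
noncomputable def gamma2 (ω : OmegaHat) : ℝ :=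
  ω.del - (∑' i, ω.aP i ^ 2) - (∑' i, ω.aM i ^ 2)

/-- The Laguerre–Pólya function E_ω. -/
noncomputable def Eomega (ω : OmegaHat) (z : ℂ) : ℂ :=
  Complex.exp (-(ω.g1 : ℂ) * z - (gamma2 ω : ℂ) / 2 * z ^ 2) *
    (∏' i, (Complex.exp (z * (ω.aP i : ℂ)) * (1 - z * (ω.aP i : ℂ)))) *
    (∏' i, (Complex.exp (-(z * (ω.aM i : ℂ))) * (1 + z * (ω.aM i : ℂ))))

/-! Put `P_R(z) = ∏_{α_i > R⁻²} (1 - α_i z)` and `S_R = ∑_{α_i > R⁻²} α_i`. Then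
`P_R(z) e^{z S_R}` is a partial product of the genus-one canonical product
`∏ e^{z α_i} (1 - z α_i)`, which converges to a nonzero limit when no factor vanishes, because
`α ∈ ℓ²` makes the logarithms of the factors summable (dominated convergence on the logarithms).
Dividing the hypothesis by the two canonical products gives
`e^{z (S⁺_R - S⁻_R)} → e^{γ₁ z + γ₂ z² / 2}`. For small real `x > 0` every factor is positive,
so taking logarithms yields `S⁺_R - S⁻_R → γ₁ + γ₂ x / 2`, and two different values of `x`
force `γ₂ = 0`. -/

@[to_additive]
theorem tprod_ite_eq_prod_toFinset {ι M : Type*} [CommMonoid M] [TopologicalSpace M]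
    {p : ι → Prop} [DecidablePred p] (hp : {i | p i}.Finite) (g : ι → M) :
    ∏' i, (if p i then g i else 1) = ∏ i ∈ hp.toFinset, g i := by
  rw [tprod_eq_prod (s := hp.toFinset) fun i hi => if_neg (by simpa using hi)]
  exact prod_congr rfl fun i hi => if_pos (by simpa using hi)

section

open Complex

theorem norm_cexp_mul_one_sub_sub_one_le {w : ℂ} (hw : ‖w‖ ≤ 1) :
    ‖cexp w * (1 - w) - 1‖ ≤ 3 * ‖w‖ ^ 2 :=
  calc ‖cexp w * (1 - w) - 1‖ = ‖(cexp w - 1 - w) - w * (cexp w - 1)‖ := by ring_nf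
    _ ≤ ‖cexp w - 1 - w‖ + ‖w‖ * ‖cexp w - 1‖ := by rw [← norm_mul]; exact norm_sub_le _ _
    _ ≤ ‖w‖ ^ 2 + ‖w‖ * (2 * ‖w‖) := by
      gcongr
      exacts [norm_exp_sub_one_sub_id_le hw, norm_exp_sub_one_le hw]
    _ = 3 * ‖w‖ ^ 2 := by ring

theorem summable_log_cexp_mul_one_sub {ι : Type*} {w : ι → ℂ}
    (hw : Summable fun i => ‖w i‖ ^ 2) :
    Summable fun i => log (cexp (w i) * (1 - w i)) := by
  have hsmall : ∀ᶠ i in cofinite, ‖w i‖ ≤ 1 := by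
    filter_upwards [hw.tendsto_cofinite_zero.eventually_le_const one_pos] with i hi
    exact (sq_le_one_iff₀ (norm_nonneg _)).mp hi
  have hsum : Summable fun i => cexp (w i) * (1 - w i) - 1 :=
    (hw.mul_left 3).of_norm_bounded_eventually
      (hsmall.mono fun i hi => norm_cexp_mul_one_sub_sub_one_le hi)
  simpa using summable_log_one_add_of_summable hsum

theorem tendsto_tprod_ite_of_summable_log {ι α : Type*} {l : Filter α} {f : ι → ℂ}
    (hf0 : ∀ i, f i ≠ 0) (hf : Summable fun i => log (f i))
    {p : α → ι → Prop} [∀ x, DecidablePred (p x)] (hp : ∀ i, f i ≠ 1 → ∀ᶠ x in l, p x i) :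
    Tendsto (fun x => ∏' i, if p x i then f i else 1) l (𝓝 (∏' i, f i)) := by
  have hbound : ∀ x i, ‖if p x i then log (f i) else 0‖ ≤ ‖log (f i)‖ := by
    intro x i; split_ifs <;> simp
  have hexp : ∀ x, ∏' i, (if p x i then f i else 1)
      = cexp (∑' i, if p x i then log (f i) else 0) := by
    intro x
    have hlog : ∀ i, log (if p x i then f i else 1) = if p x i then log (f i) else 0 := by
      intro i; split_ifs <;> simp
    rw [← cexp_tsum_eq_tprod (fun i => by split_ifs <;> simp [hf0]) (by
      simpa only [hlog] using hf.norm.of_norm_bounded (hbound x))]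
    simp only [hlog]
  have hpointwise : ∀ i,
      Tendsto (fun x => if p x i then log (f i) else 0) l (𝓝 (log (f i))) := by
    intro i
    by_cases h1 : f i = 1
    · simpa [h1] using tendsto_const_nhds
    · exact tendsto_const_nhds.congr' ((hp i h1).mono fun x hx => (if_pos hx).symm)
  simp only [hexp, ← cexp_tsum_eq_tprod hf0 hf]
  exact (continuous_exp.tendsto _).comp <| tendsto_tsum_of_dominated_convergence hf.norm
    hpointwise (Eventually.of_forall hbound)

end

noncomputable def truncatedSum {ι : Type*} (a : ι → ℝ) (R : ℝ) : ℝ :=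
  ∑' i, if R⁻¹ ^ 2 < a i then a i else 0

noncomputable def truncatedProd {ι : Type*} (a : ι → ℝ) (z : ℂ) (R : ℝ) : ℂ :=
  ∏' i, if R⁻¹ ^ 2 < a i then 1 - (a i : ℂ) * z else 1

noncomputable def canonicalProduct {ι : Type*} (a : ι → ℝ) (z : ℂ) : ℂ :=
  ∏' i, Complex.exp (z * a i) * (1 - z * a i)

section CanonicalProduct

open Complex

variable {ι : Type*} {a : ι → ℝ}

theorem finite_setOf_lt_of_summable_sq (hsq : Summable fun i => a i ^ 2) {c : ℝ} (hc : 0 < c) :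
    {i | c < a i}.Finite := by
  refine (eventually_cofinite.mp
    (hsq.tendsto_cofinite_zero.eventually (eventually_lt_nhds (pow_pos hc 2)))).subset ?_
  intro i (hi : c < a i)
  exact not_lt.mpr (pow_le_pow_left₀ hc.le hi.le 2)

theorem summable_log_canonicalFactor (hsq : Summable fun i => a i ^ 2) (z : ℂ) :
    Summable fun i => log (cexp (z * a i) * (1 - z * a i)) :=
  summable_log_cexp_mul_one_sub (by simpa [norm_mul, mul_pow] using hsq.mul_left (‖z‖ ^ 2))

theorem canonicalFactor_ne_zero {z : ℂ} (hz : ∀ i, (a i : ℂ) * z ≠ 1) (i : ι) :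
    cexp (z * a i) * (1 - z * a i) ≠ 0 :=
  mul_ne_zero (exp_ne_zero _) (sub_ne_zero.mpr (by rw [mul_comm]; exact (hz i).symm))

theorem canonicalProduct_ne_zero (hsq : Summable fun i => a i ^ 2) {z : ℂ}
    (hz : ∀ i, (a i : ℂ) * z ≠ 1) : canonicalProduct a z ≠ 0 := by
  rw [canonicalProduct, ← cexp_tsum_eq_tprod (canonicalFactor_ne_zero hz)
    (summable_log_canonicalFactor hsq z)]
  exact exp_ne_zero _

theorem truncatedProd_mul_cexp_truncatedSum (hsq : Summable fun i => a i ^ 2) (z : ℂ)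
    {R : ℝ} (hR : R ≠ 0) :
    truncatedProd a z R * cexp (z * truncatedSum a R)
      = ∏' i, if R⁻¹ ^ 2 < a i then cexp (z * a i) * (1 - z * a i) else 1 := by
  have hfin := finite_setOf_lt_of_summable_sq hsq (c := R⁻¹ ^ 2) (by positivity)
  rw [truncatedProd, truncatedSum, tprod_ite_eq_prod_toFinset hfin,
    tsum_ite_eq_sum_toFinset hfin, tprod_ite_eq_prod_toFinset hfin, ofReal_sum, mul_sum,
    exp_sum, ← prod_mul_distrib]
  exact prod_congr rfl fun i _ => by ring

theorem tendsto_truncatedProd_mul_cexp_truncatedSum (ha : ∀ i, 0 ≤ a i)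
    (hsq : Summable fun i => a i ^ 2) {z : ℂ} (hz : ∀ i, (a i : ℂ) * z ≠ 1) :
    Tendsto (fun R => truncatedProd a z R * cexp (z * truncatedSum a R)) atTop
      (𝓝 (canonicalProduct a z)) := by
  have hthreshold : Tendsto (fun R : ℝ => R⁻¹ ^ 2) atTop (𝓝 0) := by
    simpa using (tendsto_inv_atTop_zero (𝕜 := ℝ)).pow 2
  have hp : ∀ i, cexp (z * a i) * (1 - z * a i) ≠ 1 → ∀ᶠ R in atTop, R⁻¹ ^ 2 < a i := by
    intro i hi
    have hai : 0 < a i := (ha i).lt_of_ne' fun h => hi (by simp [h])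
    exact hthreshold.eventually (eventually_lt_nhds hai)
  refine (tendsto_tprod_ite_of_summable_log (canonicalFactor_ne_zero hz)
    (summable_log_canonicalFactor hsq z) hp).congr' ?_
  filter_upwards [eventually_gt_atTop 0] with R hR
  exact (truncatedProd_mul_cexp_truncatedSum hsq z hR.ne').symm

end CanonicalProduct

namespace OmegaHat

open Complex

theorem Eomega_eq (ω : OmegaHat) (z : ℂ) :
    Eomega ω z = cexp (-(ω.g1 : ℂ) * z - (gamma2 ω : ℂ) / 2 * z ^ 2) *
      canonicalProduct ω.aP z * canonicalProduct ω.aM (-z) := by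
  simp only [Eomega, canonicalProduct, neg_mul, sub_neg_eq_add]

theorem tendsto_cexp_mul_truncatedSum_sub (ω : OmegaHat) {z : ℂ}
    (h : Tendsto (fun R => truncatedProd ω.aP z R * truncatedProd ω.aM (-z) R) atTop
      (𝓝 (Eomega ω z)))
    (hzP : ∀ i, (ω.aP i : ℂ) * z ≠ 1) (hzM : ∀ i, (ω.aM i : ℂ) * -z ≠ 1) :
    Tendsto (fun R => cexp (z * (truncatedSum ω.aP R - truncatedSum ω.aM R : ℝ))) atTop
      (𝓝 (cexp (ω.g1 * z + gamma2 ω / 2 * z ^ 2))) := by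
  have hQP := canonicalProduct_ne_zero ω.summable_aP_sq hzP
  have hQM := canonicalProduct_ne_zero ω.summable_aM_sq hzM
  have hE : Eomega ω z ≠ 0 := by
    rw [Eomega_eq]; exact mul_ne_zero (mul_ne_zero (exp_ne_zero _) hQP) hQM
  have hlim : canonicalProduct ω.aP z * canonicalProduct ω.aM (-z) / Eomega ω z
      = cexp (ω.g1 * z + gamma2 ω / 2 * z ^ 2) := by
    rw [Eomega_eq, mul_assoc, div_mul_cancel_right₀ (mul_ne_zero hQP hQM), ← exp_neg]
    ring_nf
  rw [← hlim]
  refine (((tendsto_truncatedProd_mul_cexp_truncatedSum ω.aP_nonneg ω.summable_aP_sq hzP).mul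
    (tendsto_truncatedProd_mul_cexp_truncatedSum ω.aM_nonneg ω.summable_aM_sq hzM)).div
    h hE).congr' ?_
  filter_upwards [h.eventually_ne hE] with R hR
  rw [mul_ne_zero_iff] at hR
  rw [Pi.div_apply, ofReal_sub, mul_sub, sub_eq_add_neg, exp_add]
  field_simp [hR.1, hR.2]

theorem tendsto_truncatedSum_sub (ω : OmegaHat)
    {x : ℝ} (hx0 : 0 < x) (hx : x * ω.aP 0 < 1)
    (h : Tendsto (fun R => truncatedProd ω.aP x R * truncatedProd ω.aM (-x) R) atTop
      (𝓝 (Eomega ω x))) :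
    Tendsto (fun R => truncatedSum ω.aP R - truncatedSum ω.aM R) atTop
      (𝓝 (ω.g1 + gamma2 ω / 2 * x)) := by
  have hzP : ∀ i, (ω.aP i : ℂ) * x ≠ 1 := fun i => by
    exact_mod_cast (by nlinarith [ω.aP_antitone (Nat.zero_le i)] : ω.aP i * x < 1).ne
  have hzM : ∀ i, (ω.aM i : ℂ) * -(x : ℂ) ≠ 1 := fun i => by
    exact_mod_cast (by nlinarith [ω.aM_nonneg i] : ω.aM i * -x < 1).ne
  have hexp : Tendsto (fun R => Real.exp (x * (truncatedSum ω.aP R - truncatedSum ω.aM R)))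
      atTop (𝓝 (Real.exp (x * (ω.g1 + gamma2 ω / 2 * x)))) := by
    rw [← tendsto_ofReal_iff]
    push_cast
    convert tendsto_cexp_mul_truncatedSum_sub ω h hzP hzM using 3 <;> push_cast <;> ring
  simpa [hx0.ne'] using (hexp.log (Real.exp_pos _).ne').const_mul x⁻¹

end OmegaHat

/-- conversely, if for every z ∈ ℂ,
E_ω(z) = lim_{R→∞} ∏_{α_i⁺ > R⁻²} (1 − α_i⁺ z) ∏_{α_i⁻ > R⁻²} (1 + α_i⁻ z),
then γ₂ = 0 and γ₁ = lim_{R→∞} (∑_{α_i⁺ > R⁻²} α_i⁺ − ∑_{α_i⁻ > R⁻²} α_i⁻).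
(Only finitely many indices satisfy α_i^± > R⁻², so the truncated sums and
products, written here as tsums/tprods of terms that are 0 resp. 1 off a finite
set, are really finite.) -/
theorem stmt18 (ω : OmegaHat)
    (h : ∀ z : ℂ, Filter.Tendsto
      (fun R : ℝ =>
        (∏' i, if R⁻¹ ^ 2 < ω.aP i then 1 - (ω.aP i : ℂ) * z else 1) *
        (∏' i, if R⁻¹ ^ 2 < ω.aM i then 1 + (ω.aM i : ℂ) * z else 1))
      Filter.atTop (nhds (Eomega ω z))) :
    gamma2 ω = 0 ∧
    Filter.Tendsto
      (fun R : ℝ =>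
        (∑' i, if R⁻¹ ^ 2 < ω.aP i then ω.aP i else 0) -
        (∑' i, if R⁻¹ ^ 2 < ω.aM i then ω.aM i else 0))
      Filter.atTop (nhds ω.g1) := by
  have h' : ∀ z : ℂ, Tendsto (fun R => truncatedProd ω.aP z R * truncatedProd ω.aM (-z) R)
      atTop (𝓝 (Eomega ω z)) := by
    simpa only [truncatedProd, mul_neg, sub_neg_eq_add] using h
  set x := (ω.aP 0 + 1)⁻¹
  have hx0 : 0 < x := inv_pos.mpr (by linarith [ω.aP_nonneg 0])
  have hx : x * ω.aP 0 < 1 := by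
    rw [inv_mul_lt_one₀ (by linarith [ω.aP_nonneg 0])]; linarith
  have h1 := ω.tendsto_truncatedSum_sub hx0 hx (h' x)
  have h2 := ω.tendsto_truncatedSum_sub (half_pos hx0) (by linarith [ω.aP_nonneg 0]) (h' _)
  have hγ : gamma2 ω = 0 := by
    have : gamma2 ω / 2 * (x / 2) = 0 := by linarith [tendsto_nhds_unique h1 h2]
    simpa [hx0.ne'] using this
  refine ⟨hγ, ?_⟩
  rwa [hγ, zero_div, zero_mul, add_zero] at h1
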